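/- Let a, b, λ > 0. Define the angle-dependent gain factor G(θ, φ) = (1 + cos θ)² · sinc²((πb/λ)·sin θ·cos φ) · f((πa/λ)·sin θ·sin φ)², where sinc(x) = sin(x)/x for x ≠ 0 and sinc(0) = 1, and f(x) = cos(x)/(1 − (2x/π)²) extended by f(±π/2) = π/4. Then for all θ ∈ [0, π] and all φ ∈ ℝ, G(θ, φ) ≤ 4, and G(0, φ) = 4 for every φ. Hence the gain factor attains its global maximum exactly at boresight θ = 0. -/

import Mathlib

/-!
Each factor of the gain is bounded separately: `(1 + cos θ)² ≤ 4`, `sinc² ≤ 1`, and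
`patternFactor² ≤ 1`, all with equality at `θ = 0`. The last bound is
`|cos x| ≤ |1 - (2x/π)²|`. For `|x| ≤ π/2` it follows from `cos x = 1 - 2 sin²(x/2)` and the
chord bound for the concave function `sin` on `[0, π/4]`, which gives `sin²(x/2) ≥ 2x²/π²`.
For `|x| ≥ π/2` it follows from `|cos x| = |sin (|x| - π/2)| ≤ |x| - π/2` and `π ≤ 4`.
-/

/-- The unnormalized sinc function: `sinc x = sin x / x` for `x ≠ 0`, `sinc 0 = 1`. -/
noncomputable def sinc (x : ℝ) : ℝ := if x = 0 then 1 else Real.sin x / x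

/-- The one-dimensional TE₁₀ pattern factor `cos x / (1 − (2x/π)²)`, extended through
its removable singularities at `x = ±π/2` by the value `π/4`. -/
noncomputable def patternFactor (x : ℝ) : ℝ :=
  if x = Real.pi / 2 ∨ x = -(Real.pi / 2) then Real.pi / 4
  else Real.cos x / (1 - (2 * x / Real.pi) ^ 2)

/-- The angle-dependent gain factor of a rectangular TE₁₀ aperture of dimensions
`a × b` at wavelength `lam`:
`G(θ,φ) = (1+cos θ)² · sinc²((πb/lam) sin θ cos φ) · patternFactor((πa/lam) sin θ sin φ)²`. -/
noncomputable def gainFactor (a b lam θ φ : ℝ) : ℝ :=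
  (1 + Real.cos θ) ^ 2 * (sinc (Real.pi * b / lam * Real.sin θ * Real.cos φ)) ^ 2 *
    (patternFactor (Real.pi * a / lam * Real.sin θ * Real.sin φ)) ^ 2

open Real hiding sinc

lemma sinc_eq_real_sinc : sinc = Real.sinc := rfl

lemma mul_sin_le_sin_mul {a s : ℝ} (ha₀ : 0 ≤ a) (ha : a ≤ π) (hs₀ : 0 ≤ s) (hs : s ≤ 1) :
    s * sin a ≤ sin (s * a) := by
  simpa using strictConcaveOn_sin_Icc.concaveOn.2 ⟨le_rfl, pi_pos.le⟩ ⟨ha₀, ha⟩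
    (sub_nonneg.2 hs) hs₀ (by ring)

lemma cos_le_one_sub_sq {y : ℝ} (hy₀ : 0 ≤ y) (hy : y ≤ π / 2) :
    cos y ≤ 1 - (2 * y / π) ^ 2 := by
  set s := 2 * y / π
  have hs₀ : 0 ≤ s := by positivity
  have hs : s ≤ 1 := by rw [div_le_one pi_pos]; linarith
  have hchord : s * (√2 / 2) ≤ sin (y / 2) := by
    have h := mul_sin_le_sin_mul (a := π / 4) (by positivity) (by linarith [pi_pos]) hs₀ hs
    rwa [sin_pi_div_four, show s * (π / 4) = y / 2 by simp only [s]; field_simp; ring] at h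
  have hsin_sq : s ^ 2 / 2 ≤ sin (y / 2) ^ 2 := by
    calc s ^ 2 / 2 = s ^ 2 * (√2 ^ 2 / 4) := by rw [sq_sqrt zero_le_two]; ring
      _ = (s * (√2 / 2)) ^ 2 := by ring
      _ ≤ sin (y / 2) ^ 2 := pow_le_pow_left₀ (by positivity) hchord 2
  have hhalf : sin (y / 2) ^ 2 = 1 / 2 - cos y / 2 := by
    rw [sin_sq_eq_half_sub, mul_div_cancel₀ y two_ne_zero]
  linarith

lemma abs_cos_le_sq_sub_one {y : ℝ} (hy : π / 2 ≤ y) : |cos y| ≤ (2 * y / π) ^ 2 - 1 := by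
  have hπ := pi_pos
  have hcos : |cos y| ≤ y - π / 2 := by
    calc |cos y| = |sin (y - π / 2)| := by rw [sin_sub_pi_div_two, abs_neg]
      _ ≤ |y - π / 2| := abs_sin_le_abs
      _ = y - π / 2 := abs_of_nonneg (by linarith)
  have hquad : y - π / 2 ≤ (2 * y / π) ^ 2 - 1 := by
    rw [div_pow, le_sub_iff_add_le, le_div_iff₀ (by positivity)]
    have hu : 0 ≤ y - π / 2 := by linarith
    nlinarith [mul_le_mul_of_nonneg_left pi_le_four (mul_nonneg hu hπ.le)]
  exact hcos.trans hquad

lemma abs_cos_le_abs_one_sub_sq (x : ℝ) : |cos x| ≤ |1 - (2 * x / π) ^ 2| := by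
  rw [← cos_abs, show (2 * x / π) ^ 2 = (2 * |x| / π) ^ 2 by rw [div_pow, div_pow, mul_pow,
    mul_pow, sq_abs]]
  rcases le_total |x| (π / 2) with hx | hx
  · have hcos := cos_le_one_sub_sq (abs_nonneg x) hx
    rw [abs_of_nonneg (cos_nonneg_of_neg_pi_div_two_le_of_le (by linarith [abs_nonneg x]) hx)]
    exact hcos.trans (le_abs_self _)
  · exact (abs_cos_le_sq_sub_one hx).trans (by rw [abs_sub_comm]; exact le_abs_self _)

lemma patternFactor_zero : patternFactor 0 = 1 := by
  have h : ¬(0 = π / 2 ∨ 0 = -(π / 2)) := by rintro (h | h) <;> linarith [pi_pos]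
  rw [patternFactor, if_neg h]
  norm_num

lemma patternFactor_sq_le_one (x : ℝ) : patternFactor x ^ 2 ≤ 1 := by
  unfold patternFactor
  split_ifs
  · rw [div_pow, div_le_one (by norm_num)]
    nlinarith [pi_pos, pi_le_four]
  · rw [sq_le_one_iff_abs_le_one, abs_div]
    exact div_le_one_of_le₀ (abs_cos_le_abs_one_sub_sq x) (abs_nonneg _)

theorem gainFactor_le_four_general (a b lam : ℝ) :
    (∀ θ ∈ Set.Icc (0 : ℝ) Real.pi, ∀ φ : ℝ, gainFactor a b lam θ φ ≤ 4) ∧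
      (∀ φ : ℝ, gainFactor a b lam 0 φ = 4) := by
  refine ⟨fun θ _ φ => ?_, fun φ => ?_⟩
  · have hobliquity : (1 + cos θ) ^ 2 ≤ 4 := by
      nlinarith [cos_le_one θ, neg_one_le_cos θ]
    calc gainFactor a b lam θ φ
        ≤ 4 * 1 * 1 := by
          rw [gainFactor, sinc_eq_real_sinc]
          gcongr
          exacts [(sq_le_one_iff_abs_le_one _).2 (abs_sinc_le_one _), patternFactor_sq_le_one _]
      _ = 4 := by norm_num
  · simp only [gainFactor, sinc_eq_real_sinc, sin_zero, cos_zero, mul_zero, zero_mul,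
      Real.sinc_zero, patternFactor_zero]
    norm_num

/-- **Boresight optimality of the gain factor.** For `a, b, λ > 0`, the gain factor
satisfies `G(θ,φ) ≤ 4` for all `θ ∈ [0,π]` and all `φ`, and `G(0,φ) = 4` for every `φ`;
hence the global maximum is attained exactly at boresight `θ = 0`. -/
theorem gainFactor_le_four (a b lam : ℝ) (ha : 0 < a) (hb : 0 < b) (hlam : 0 < lam) :
    (∀ θ ∈ Set.Icc (0 : ℝ) Real.pi, ∀ φ : ℝ, gainFactor a b lam θ φ ≤ 4) ∧
      (∀ φ : ℝ, gainFactor a b lam 0 φ = 4) :=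
  gainFactor_le_four_general a b lam
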